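/- For any conditional distribution Q_{Y|X} with joint Q = P × Q_{Y|X} and Q_Y = (P×W)_Y, the exponent E₂ = min_{Q_{Y|X}} { 𝒟(Q_{Y|X}‖W|P) + [R̄(α−β; (P×Q_{Y|X})_Y) − R]_+ } vanishes if and only if R ≥ R̄(α−β; (P×W)_Y) (taking Q_{Y|X} = W makes the divergence zero). Consequently, if α − β ≤ D(P×W) then the decoding-error exponent min{E₁, E₂} is positive for all R < I(P×W); i.e., there is no rate loss relative to ordinary decoding. -/

import Mathlib

open scoped BigOperators

variable {X Y : Type*} [Fintype X] [Fintype Y]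

/-- X-marginal of a joint distribution on `X × Y`. -/
noncomputable def margX (Q : X × Y → ℝ) (x : X) : ℝ := ∑ y, Q (x, y)

/-- Y-marginal of a joint distribution on `X × Y`. -/
noncomputable def margY (Q : X × Y → ℝ) (y : Y) : ℝ := ∑ x, Q (x, y)

/-- Mutual information `I(Q)` of a joint distribution `Q` on `X × Y`. -/
noncomputable def mutInfo (Q : X × Y → ℝ) : ℝ :=
  ∑ x, ∑ y, Q (x, y) * Real.log (Q (x, y) / (margX Q x * margY Q y))

/-- Expected "distortion" `D(Q) = E_Q[d(X,Y)]`. -/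
noncomputable def Dav (d : X → Y → ℝ) (Q : X × Y → ℝ) : ℝ :=
  ∑ x, ∑ y, Q (x, y) * d x y

/-- `Q` is a joint distribution with X-marginal `P` and Y-marginal `QY`. -/
def IsJoint (P : X → ℝ) (QY : Y → ℝ) (Q : X × Y → ℝ) : Prop :=
  (∀ p, 0 ≤ Q p) ∧ (∀ x, margX Q x = P x) ∧ (∀ y, margY Q y = QY y)

/-- `QYX` is a conditional distribution (channel) from `X` to `Y`. -/
def IsCond (QYX : X → Y → ℝ) : Prop :=
  (∀ x y, 0 ≤ QYX x y) ∧ (∀ x, ∑ y, QYX x y = 1)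

/-- Conditional divergence `𝒟(Q_{Y|X} ‖ W | P)`. -/
noncomputable def condDiv (P : X → ℝ) (QYX W : X → Y → ℝ) : ℝ :=
  ∑ x, P x * ∑ y, QYX x y * Real.log (QYX x y / W x y)

/-- The rate function `R̄(Δ; Q_Y)` as an extended real (`+∞` for an empty constraint
set): infimum of `I(Q)` over joints with X-marginal `P`, Y-marginal `QY`, `D(Q) ≤ Δ`. -/
noncomputable def RbarE (P : X → ℝ) (d : X → Y → ℝ) (Δ : ℝ) (QY : Y → ℝ) : EReal :=
  ⨅ Q : {Q : X × Y → ℝ // IsJoint P QY Q ∧ Dav d Q ≤ Δ}, ((mutInfo Q.1 : ℝ) : EReal)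

/-- The exponent `E₁` (extended real). -/
noncomputable def E1exp (P : X → ℝ) (W : X → Y → ℝ) (d : X → Y → ℝ) (α β R : ℝ) : EReal :=
  ⨅ QYX : {Q : X → Y → ℝ // IsCond Q ∧
      Dav d (fun p => P p.1 * Q p.1 p.2) ≤ max α 0 - β},
    (((condDiv P QYX.1 W : ℝ) : EReal) +
      max (RbarE P d (Dav d (fun p => P p.1 * QYX.1 p.1 p.2))
            (margY (fun p => P p.1 * QYX.1 p.1 p.2)) - (R : EReal)) 0)

/-- The exponent `E₂` (extended real). -/
noncomputable def E2exp (P : X → ℝ) (W : X → Y → ℝ) (d : X → Y → ℝ) (α β R : ℝ) : EReal :=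
  ⨅ QYX : {Q : X → Y → ℝ // IsCond Q},
    (((condDiv P QYX.1 W : ℝ) : EReal) +
      max (RbarE P d (α - β) (margY (fun p => P p.1 * QYX.1 p.1 p.2)) - (R : EReal)) 0)

/-! With `d(x,y) = log (Q₀(y) / W(y|x))`, every joint `Q` with marginals `P` and `Q_Y` satisfies
`I(Q) = D(Q ‖ P×W) - D(Q_Y ‖ Q₀) - D(Q)`, hence `R̄(Δ; (P×W)_Y) ≥ I(P×W) + D(P×W) - Δ`, which
exceeds `R` as soon as `Δ < D(P×W) + I(P×W) - R`.

Conversely, if one of the exponents vanishes there are channels `V` with `𝒟(V ‖ W | P) → 0` and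
`R̄(Δ; (P×V)_Y)` at most `R` in the limit. Compactness of the set of channels forces `P×V → P×W`,
and compactness of the joints whose `Y`-marginal stays above `(P×W)_Y / 2` (where `I` is
continuous) makes `R̄(Δ; ·)` lower semicontinuous at `(P×W)_Y`, so `R̄(Δ; (P×W)_Y) ≤ R`. For `E₂`
this gives the equivalence (the channel `W` itself gives the converse); for `E₁` it is applied
with `Δ` slightly above `D(P×W)`. -/

open Real Set Topology InformationTheory

noncomputable def relEntropy {ι : Type*} [Fintype ι] (q w : ι → ℝ) : ℝ :=
  ∑ i, q i * log (q i / w i)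

lemma mul_log_div_eq_mul_klFun_add {q w : ℝ} (h : w = 0 → q = 0) :
    q * log (q / w) = w * klFun (q / w) + (q - w) := by
  rcases eq_or_ne w 0 with rfl | hw
  · simp [h rfl]
  · rw [klFun_apply]
    field_simp
    ring

section relEntropy

variable {ι : Type*} [Fintype ι] {q w : ι → ℝ}

lemma relEntropy_eq_sum_mul_klFun (h : ∀ i, w i = 0 → q i = 0)
    (hsum : ∑ i, q i = ∑ i, w i) : relEntropy q w = ∑ i, w i * klFun (q i / w i) := by
  simp only [relEntropy, mul_log_div_eq_mul_klFun_add (h _), Finset.sum_add_distrib,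
    Finset.sum_sub_distrib, hsum, sub_self, add_zero]

lemma relEntropy_nonneg (hq : ∀ i, 0 ≤ q i) (hw : ∀ i, 0 ≤ w i) (h : ∀ i, w i = 0 → q i = 0)
    (hsum : ∑ i, q i = ∑ i, w i) : 0 ≤ relEntropy q w := by
  rw [relEntropy_eq_sum_mul_klFun h hsum]
  exact Finset.sum_nonneg fun i _ => mul_nonneg (hw i) (klFun_nonneg (div_nonneg (hq i) (hw i)))

lemma eq_of_relEntropy_eq_zero (hq : ∀ i, 0 ≤ q i) (hw : ∀ i, 0 < w i)
    (hsum : ∑ i, q i = ∑ i, w i) (h0 : relEntropy q w = 0) : q = w := by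
  have hklFun := fun i => klFun_nonneg (div_nonneg (hq i) (hw i).le)
  rw [relEntropy_eq_sum_mul_klFun (fun i hi => absurd hi (hw i).ne') hsum,
    Finset.sum_eq_zero_iff_of_nonneg fun i _ => mul_nonneg (hw i).le (hklFun i)] at h0
  funext i
  have := (mul_eq_zero.mp (h0 i (Finset.mem_univ i))).resolve_left (hw i).ne'
  rw [klFun_eq_zero_iff (div_nonneg (hq i) (hw i).le), div_eq_one_iff_eq (hw i).ne'] at this
  exact this

@[simp] lemma relEntropy_self (q : ι → ℝ) : relEntropy q q = 0 := by
  simp [relEntropy]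

end relEntropy

noncomputable def compProd (P : X → ℝ) (V : X → Y → ℝ) : X × Y → ℝ :=
  fun p => P p.1 * V p.1 p.2

section condDiv

variable {P : X → ℝ} {V W : X → Y → ℝ}

lemma condDiv_eq_sum_relEntropy : condDiv P V W = ∑ x, P x * relEntropy (V x) (W x) := rfl

lemma condDiv_nonneg (hP : ∀ x, 0 ≤ P x) (hV : IsCond V) (hW : ∀ x y, 0 < W x y)
    (hWsum : ∀ x, ∑ y, W x y = 1) : 0 ≤ condDiv P V W :=
  Finset.sum_nonneg fun x _ => mul_nonneg (hP x) <|
    relEntropy_nonneg (hV.1 x) (fun y => (hW x y).le) (fun y hy => absurd hy (hW x y).ne')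
      ((hV.2 x).trans (hWsum x).symm)

lemma compProd_eq_of_condDiv_eq_zero (hP : ∀ x, 0 ≤ P x) (hV : IsCond V)
    (hW : ∀ x y, 0 < W x y) (hWsum : ∀ x, ∑ y, W x y = 1) (h0 : condDiv P V W = 0) :
    compProd P V = compProd P W := by
  have hrow : ∀ x, 0 ≤ P x * relEntropy (V x) (W x) := fun x =>
    mul_nonneg (hP x) <| relEntropy_nonneg (hV.1 x) (fun y => (hW x y).le)
      (fun y hy => absurd hy (hW x y).ne') ((hV.2 x).trans (hWsum x).symm)
  rw [condDiv_eq_sum_relEntropy, Finset.sum_eq_zero_iff_of_nonneg fun x _ => hrow x] at h0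
  funext ⟨x, y⟩
  rcases (mul_eq_zero.mp (h0 x (Finset.mem_univ x))) with hPx | hrel
  · simp [compProd, hPx]
  · have hVx := eq_of_relEntropy_eq_zero (hV.1 x) (hW x) ((hV.2 x).trans (hWsum x).symm) hrel
    simp [compProd, hVx]

lemma continuous_condDiv (hW : ∀ x y, W x y ≠ 0) : Continuous fun V => condDiv P V W := by
  have hterm : ∀ (q : ℝ) x y, q * log (q / W x y) = q * log q - q * log (W x y) := by
    intro q x y
    rcases eq_or_ne q 0 with rfl | hq
    · simp
    · rw [log_div hq (hW x y)]; ring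
  simp only [condDiv, hterm]
  fun_prop

end condDiv

lemma isCompact_setOf_isCond {α β : Type*} [Fintype β] :
    IsCompact {V : α → β → ℝ | IsCond V} := by
  have h : {V : α → β → ℝ | IsCond V} = univ.pi fun _ => stdSimplex ℝ β := by
    ext V
    simp [IsCond, stdSimplex, forall_and]
  rw [h]
  exact isCompact_univ_pi fun _ => isCompact_stdSimplex ℝ β

lemma exists_forall_condDiv_lt_compProd_mem {P : X → ℝ} {W : X → Y → ℝ} (hP : ∀ x, 0 ≤ P x)
    (hW : ∀ x y, 0 < W x y) (hWsum : ∀ x, ∑ y, W x y = 1) {U : Set (X × Y → ℝ)}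
    (hU : U ∈ 𝓝 (compProd P W)) :
    ∃ ε > 0, ∀ V, IsCond V → condDiv P V W < ε → compProd P V ∈ U := by
  set C := {V | IsCond V} ∩ (compProd P) ⁻¹' (interior U)ᶜ
  have hC : IsCompact C := isCompact_setOf_isCond.inter_right <|
    isOpen_interior.isClosed_compl.preimage (by unfold compProd; fun_prop)
  rcases C.eq_empty_or_nonempty with hC0 | hCne
  · refine ⟨1, one_pos, fun V hV _ => interior_subset ?_⟩
    by_contra h
    have hVC : V ∈ C := ⟨hV, h⟩
    rwa [hC0] at hVC
  · obtain ⟨V₀, hV₀C, hmin⟩ :=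
      hC.exists_isMinOn hCne (continuous_condDiv fun x y => (hW x y).ne').continuousOn
    refine ⟨condDiv P V₀ W, (condDiv_nonneg hP hV₀C.1 hW hWsum).lt_of_ne fun h => ?_,
      fun V hV hlt => interior_subset ?_⟩
    · exact hV₀C.2 (compProd_eq_of_condDiv_eq_zero hP hV₀C.1 hW hWsum h.symm ▸
        mem_interior_iff_mem_nhds.2 hU)
    · by_contra h
      exact (hmin ⟨hV, h⟩).not_gt hlt

section joint

variable {P : X → ℝ} {W : X → Y → ℝ} {QY : Y → ℝ} {Q : X × Y → ℝ}

lemma le_margX {α β : Type*} [Fintype β] {Q : α × β → ℝ} (hQ : ∀ p, 0 ≤ Q p) (x : α) (y : β) :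
    Q (x, y) ≤ margX Q x :=
  Finset.single_le_sum (fun y' _ => hQ (x, y')) (Finset.mem_univ y)

lemma le_margY {α β : Type*} [Fintype α] {Q : α × β → ℝ} (hQ : ∀ p, 0 ≤ Q p) (x : α) (y : β) :
    Q (x, y) ≤ margY Q y :=
  Finset.single_le_sum (fun x' _ => hQ (x', y)) (Finset.mem_univ x)

lemma isJoint_compProd {V : X → Y → ℝ} (hP : ∀ x, 0 ≤ P x) (hV : IsCond V) :
    IsJoint P (margY (compProd P V)) (compProd P V) :=
  ⟨fun p => mul_nonneg (hP p.1) (hV.1 p.1 p.2),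
    fun x => by simp [margX, compProd, ← Finset.mul_sum, hV.2 x], fun _ => rfl⟩

lemma relEntropy_compProd_nonneg (hW : ∀ x y, 0 < W x y) (hWsum : ∀ x, ∑ y, W x y = 1)
    (hJ : IsJoint P QY Q) : 0 ≤ relEntropy Q (compProd P W) := by
  obtain ⟨hQ, hQX, -⟩ := hJ
  have hP : ∀ x, 0 ≤ P x := fun x => hQX x ▸ Finset.sum_nonneg fun y _ => hQ (x, y)
  refine relEntropy_nonneg hQ (fun p => mul_nonneg (hP p.1) (hW p.1 p.2).le) (fun p hp => ?_) ?_
  · have hPx : P p.1 = 0 := (mul_eq_zero.mp hp).resolve_right (hW p.1 p.2).ne'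
    exact le_antisymm (hPx ▸ hQX p.1 ▸ le_margX hQ p.1 p.2) (hQ p)
  · simp only [Fintype.sum_prod_type, compProd, ← Finset.mul_sum, hWsum, mul_one]
    exact Finset.sum_congr rfl fun x _ => hQX x

variable {Q0 : Y → ℝ} {d : X → Y → ℝ}

lemma mutInfo_eq_relEntropy_sub (hW : ∀ x y, 0 < W x y) (hQ0 : ∀ y, 0 < Q0 y)
    (hd : ∀ x y, d x y = log (Q0 y / W x y)) (hJ : IsJoint P QY Q) :
    mutInfo Q = relEntropy Q (compProd P W) - relEntropy QY Q0 - Dav d Q := by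
  obtain ⟨hQ, hQX, hQY⟩ := hJ
  have hterm : ∀ x y, Q (x, y) * log (Q (x, y) / (margX Q x * margY Q y)) =
      Q (x, y) * log (Q (x, y) / (P x * W x y)) - Q (x, y) * log (QY y / Q0 y) -
        Q (x, y) * d x y := by
    intro x y
    rcases (hQ (x, y)).eq_or_lt with h0 | hpos
    · simp [← h0]
    have hPx : 0 < P x := hpos.trans_le (hQX x ▸ le_margX hQ x y)
    have hQYy : 0 < QY y := hpos.trans_le (hQY y ▸ le_margY hQ x y)
    rw [hQX x, hQY y, hd x y, log_div hpos.ne' (mul_pos hPx (hW x y)).ne',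
      log_div hpos.ne' (mul_pos hPx hQYy).ne', log_div (hQ0 y).ne' (hW x y).ne',
      log_div hQYy.ne' (hQ0 y).ne', log_mul hPx.ne' hQYy.ne', log_mul hPx.ne' (hW x y).ne']
    ring
  have hmargY : ∑ x, ∑ y, Q (x, y) * log (QY y / Q0 y) = relEntropy QY Q0 := by
    rw [Finset.sum_comm]
    simp only [← Finset.sum_mul]
    exact Finset.sum_congr rfl fun y _ => by rw [← hQY y]; rfl
  have hjoint : relEntropy Q (compProd P W) =
      ∑ x, ∑ y, Q (x, y) * log (Q (x, y) / (P x * W x y)) := Fintype.sum_prod_type _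
  simp only [mutInfo, hterm, Finset.sum_sub_distrib, hmargY, hjoint, Dav]

end joint

section RbarE

variable {P : X → ℝ} {d : X → Y → ℝ} {Δ : ℝ} {QY : Y → ℝ}

lemma RbarE_le_mutInfo {Q : X × Y → ℝ} (hJ : IsJoint P QY Q) (hD : Dav d Q ≤ Δ) :
    RbarE P d Δ QY ≤ mutInfo Q :=
  iInf_le (fun Q : {Q // IsJoint P QY Q ∧ Dav d Q ≤ Δ} => ((mutInfo Q.1 : ℝ) : EReal)) ⟨Q, hJ, hD⟩

lemma RbarE_antitone : Antitone fun Δ => RbarE P d Δ QY :=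
  fun _ _ hΔ => le_iInf fun ⟨_, hJ, hD⟩ => RbarE_le_mutInfo hJ (hD.trans hΔ)

lemma exists_mutInfo_lt_of_RbarE_lt {t : ℝ} (h : RbarE P d Δ QY < t) :
    ∃ Q, IsJoint P QY Q ∧ Dav d Q ≤ Δ ∧ mutInfo Q < t := by
  obtain ⟨⟨Q, hJ, hD⟩, hQ⟩ := iInf_lt_iff.mp h
  exact ⟨Q, hJ, hD, EReal.coe_lt_coe_iff.mp hQ⟩

lemma coe_mutInfo_add_Dav_sub_le_RbarE {W : X → Y → ℝ} {Q0 : Y → ℝ} (hP : ∀ x, 0 ≤ P x)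
    (hW : ∀ x y, 0 < W x y) (hWsum : ∀ x, ∑ y, W x y = 1) (hQ0 : ∀ y, 0 < Q0 y)
    (hd : ∀ x y, d x y = log (Q0 y / W x y)) :
    ((mutInfo (compProd P W) + Dav d (compProd P W) - Δ : ℝ) : EReal) ≤
      RbarE P d Δ (margY (compProd P W)) := by
  have hWcond : IsCond W := ⟨fun x y => (hW x y).le, hWsum⟩
  have hPW := mutInfo_eq_relEntropy_sub hW hQ0 hd (isJoint_compProd hP hWcond)
  rw [relEntropy_self] at hPW
  refine le_iInf fun ⟨Q, hJ, hD⟩ => EReal.coe_le_coe_iff.mpr ?_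
  have hQ := mutInfo_eq_relEntropy_sub hW hQ0 hd hJ
  have := relEntropy_compProd_nonneg hW hWsum hJ
  linarith

end RbarE

def sublevelJoints (P : X → ℝ) (d : X → Y → ℝ) (Δ c : ℝ) : Set (X × Y → ℝ) :=
  {Q | (∀ p, 0 ≤ Q p) ∧ (∀ x, margX Q x = P x) ∧ Dav d Q ≤ Δ ∧ mutInfo Q ≤ c}

section sublevel

variable {P : X → ℝ} {d : X → Y → ℝ} {Δ c : ℝ} {QY : Y → ℝ}

lemma RbarE_le_of_mem_image_margY (h : QY ∈ margY '' sublevelJoints P d Δ c) :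
    RbarE P d Δ QY ≤ c := by
  obtain ⟨Q, ⟨hQ, hQX, hD, hI⟩, rfl⟩ := h
  exact (RbarE_le_mutInfo ⟨hQ, hQX, fun _ => rfl⟩ hD).trans (EReal.coe_le_coe_iff.mpr hI)

lemma continuousOn_mutInfo :
    ContinuousOn mutInfo
      {Q : X × Y → ℝ | (∀ p, 0 ≤ Q p) ∧ (∀ x, margX Q x = P x) ∧ ∀ y, margY Q y ≠ 0} := by
  refine ContinuousOn.congr (f := fun Q => ∑ x, ∑ y, (Q (x, y) * log (Q (x, y)) -
      Q (x, y) * log (P x) - Q (x, y) * log (margY Q y))) ?_ fun Q ⟨hQ, hQX, _⟩ => ?_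
  · refine continuousOn_finsetSum _ fun x _ => continuousOn_finsetSum _ fun y _ => ?_
    refine .sub (by fun_prop) (.mul (continuous_apply _).continuousOn fun Q hQ => ?_)
    have hmargY : Continuous fun Q : X × Y → ℝ => margY Q y := by unfold margY; fun_prop
    exact (hmargY.continuousAt.log (hQ.2.2 y)).continuousWithinAt
  · refine Finset.sum_congr rfl fun x _ => Finset.sum_congr rfl fun y _ => ?_
    rcases (hQ (x, y)).eq_or_lt with h0 | hpos
    · simp [← h0]
    have hPx : 0 < P x := hpos.trans_le (hQX x ▸ le_margX hQ x y)
    have hQYy : 0 < margY Q y := hpos.trans_le (le_margY hQ x y)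
    rw [hQX x, log_div hpos.ne' (mul_pos hPx hQYy).ne', log_mul hPx.ne' hQYy.ne']
    ring

lemma mem_image_margY_of_mem_closure (hQY : ∀ y, 0 < QY y)
    (h : QY ∈ closure (margY '' sublevelJoints P d Δ c)) :
    QY ∈ margY '' sublevelJoints P d Δ c := by
  set A := {Q : X × Y → ℝ | (∀ p, 0 ≤ Q p) ∧ (∀ x, margX Q x = P x) ∧ Dav d Q ≤ Δ ∧
    ∀ y, QY y / 2 ≤ margY Q y}
  set K := A ∩ mutInfo ⁻¹' Iic c
  have hA : IsClosed A := by
    simp only [A, ofPred_and, ofPred_forall]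
    refine .inter (isClosed_iInter fun p => isClosed_le continuous_const (continuous_apply p)) <|
      .inter (isClosed_iInter fun x => isClosed_eq (by unfold margX; fun_prop) continuous_const) <|
      .inter (isClosed_le (by unfold Dav; fun_prop) continuous_const) <|
      isClosed_iInter fun y => isClosed_le continuous_const (by unfold margY; fun_prop)
  have hKclosed : IsClosed K :=
    (continuousOn_mutInfo.mono fun Q hQ => ⟨hQ.1, hQ.2.1, fun y =>
      ((half_pos (hQY y)).trans_le (hQ.2.2.2 y)).ne'⟩).preimage_isClosed_of_isClosed hA isClosed_Iic
  have hK : IsCompact K :=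
    (isCompact_univ_pi fun p : X × Y => isCompact_Icc (a := 0) (b := P p.1)).of_isClosed_subset
      hKclosed fun Q hQ => mem_univ_pi.mpr fun p =>
        ⟨hQ.1.1 p, hQ.1.2.1 p.1 ▸ le_margX hQ.1.1 p.1 p.2⟩
  set O := {q : Y → ℝ | ∀ y, QY y / 2 < q y}
  have hO : IsOpen O := by
    simp only [O, ofPred_forall]
    exact isOpen_iInter_of_finite fun y => isOpen_lt continuous_const (continuous_apply y)
  have hOK : O ∩ margY '' sublevelJoints P d Δ c ⊆ margY '' K := by
    rintro _ ⟨hq, Q, ⟨hQ, hQX, hD, hI⟩, rfl⟩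
    exact ⟨Q, ⟨⟨hQ, hQX, hD, fun y => (hq y).le⟩, hI⟩, rfl⟩
  have hKimage : IsClosed (margY '' K) := (hK.image (by unfold margY; fun_prop)).isClosed
  have hQYO : QY ∈ O ∩ closure (margY '' sublevelJoints P d Δ c) :=
    ⟨fun y => half_lt_self (hQY y), h⟩
  have hQYK : QY ∈ margY '' K :=
    hKimage.closure_subset (closure_mono hOK (hO.inter_closure hQYO))
  have hKS : K ⊆ sublevelJoints P d Δ c := fun Q hQ => ⟨hQ.1.1, hQ.1.2.1, hQ.1.2.2.1, hQ.2⟩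
  exact image_mono hKS hQYK

end sublevel

section exponents

variable {P : X → ℝ} {W : X → Y → ℝ} {d : X → Y → ℝ}

lemma margY_compProd_pos {α β : Type*} [Fintype α] {P : α → ℝ} {W : α → β → ℝ}
    (hP : ∀ x, 0 ≤ P x) (hPsum : ∑ x, P x = 1) (hW : ∀ x y, 0 < W x y) (y : β) :
    0 < margY (compProd P W) y := by
  obtain ⟨x, -, hx⟩ := Finset.exists_ne_zero_of_sum_ne_zero (hPsum ▸ one_ne_zero)
  exact Finset.sum_pos' (fun x _ => mul_nonneg (hP x) (hW x y).le)
    ⟨x, Finset.mem_univ x, mul_pos ((hP x).lt_of_ne' hx) (hW x y)⟩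

lemma RbarE_le_of_forall_condDiv_lt (hP : ∀ x, 0 ≤ P x) (hPsum : ∑ x, P x = 1)
    (hW : ∀ x y, 0 < W x y) (hWsum : ∀ x, ∑ y, W x y = 1) {Δ c : ℝ}
    (H : ∀ ε > 0, ∃ V, IsCond V ∧ condDiv P V W < ε ∧
      RbarE P d Δ (margY (compProd P V)) < (c + ε : ℝ)) :
    RbarE P d Δ (margY (compProd P W)) ≤ c := by
  refine EReal.le_of_forall_lt_iff_le.mp fun t ht => RbarE_le_of_mem_image_margY <|
    mem_image_margY_of_mem_closure (margY_compProd_pos hP hPsum hW) <|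
      mem_closure_iff_nhds.mpr fun U hU => ?_
  have hct : c < t := EReal.coe_lt_coe_iff.mp ht
  have hmargY : Continuous (margY : (X × Y → ℝ) → Y → ℝ) := by unfold margY; fun_prop
  obtain ⟨ε, hε, hV⟩ := exists_forall_condDiv_lt_compProd_mem hP hW hWsum
    (hmargY.continuousAt.preimage_mem_nhds hU)
  obtain ⟨V, hVc, hVdiv, hVR⟩ := H (min ε (t - c)) (lt_min hε (sub_pos.2 hct))
  obtain ⟨Q, hJ, hD, hI⟩ := exists_mutInfo_lt_of_RbarE_lt hVR
  have hQY : margY Q = margY (compProd P V) := funext hJ.2.2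
  refine ⟨margY Q, hQY ▸ hV V hVc (hVdiv.trans_le (min_le_left _ _)),
    Q, ⟨hJ.1, hJ.2.1, hD, ?_⟩, rfl⟩
  linarith [min_le_right ε (t - c)]

lemma lt_and_lt_of_coe_add_max_sub_lt {a : ℝ} (ha : 0 ≤ a) {b : EReal} {r ε : ℝ}
    (h : (a : EReal) + max (b - r) 0 < ε) : a < ε ∧ b < (r + ε : ℝ) := by
  have hmax : 0 ≤ max (b - r) 0 := le_max_right _ _
  refine ⟨EReal.coe_lt_coe_iff.mp ((le_add_of_nonneg_right hmax).trans_lt h), ?_⟩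
  have hb : b - r < ε :=
    (le_max_left _ _).trans_lt ((le_add_of_nonneg_left (EReal.coe_nonneg.mpr ha)).trans_lt h)
  rw [EReal.coe_add, add_comm]
  exact (EReal.sub_lt_iff (.inl (EReal.coe_ne_bot r)) (.inl (EReal.coe_ne_top r))).mp hb

variable {α β R : ℝ}

lemma E2exp_nonneg (hP : ∀ x, 0 ≤ P x) (hW : ∀ x y, 0 < W x y) (hWsum : ∀ x, ∑ y, W x y = 1) :
    0 ≤ E2exp P W d α β R :=
  le_iInf fun ⟨_, hV⟩ =>
    add_nonneg (EReal.coe_nonneg.mpr (condDiv_nonneg hP hV hW hWsum)) (le_max_right _ _)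

lemma E2exp_nonpos_of_RbarE_le (hW : IsCond W)
    (h : RbarE P d (α - β) (margY (compProd P W)) ≤ R) : E2exp P W d α β R ≤ 0 := by
  refine (iInf_le _ ⟨W, hW⟩).trans (le_of_eq ?_)
  have hsub : RbarE P d (α - β) (margY (compProd P W)) - R ≤ 0 :=
    EReal.sub_le_of_le_add (by rwa [zero_add])
  change ((condDiv P W W : ℝ) : EReal) +
    max (RbarE P d (α - β) (margY (compProd P W)) - R) 0 = 0
  simp [condDiv_eq_sum_relEntropy, max_eq_right hsub]

lemma RbarE_le_of_E2exp_nonpos (hP : ∀ x, 0 ≤ P x) (hPsum : ∑ x, P x = 1)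
    (hW : ∀ x y, 0 < W x y) (hWsum : ∀ x, ∑ y, W x y = 1) (h : E2exp P W d α β R ≤ 0) :
    RbarE P d (α - β) (margY (compProd P W)) ≤ R := by
  refine RbarE_le_of_forall_condDiv_lt hP hPsum hW hWsum fun ε hε => ?_
  obtain ⟨⟨V, hV⟩, hVlt⟩ := iInf_lt_iff.mp (h.trans_lt (EReal.coe_pos.mpr hε))
  exact ⟨V, hV, lt_and_lt_of_coe_add_max_sub_lt (condDiv_nonneg hP hV hW hWsum) hVlt⟩

lemma RbarE_le_of_E1exp_nonpos (hP : ∀ x, 0 ≤ P x) (hPsum : ∑ x, P x = 1)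
    (hW : ∀ x y, 0 < W x y) (hWsum : ∀ x, ∑ y, W x y = 1) (h : E1exp P W d α β R ≤ 0) {Δ : ℝ}
    (hΔ : Dav d (compProd P W) < Δ) : RbarE P d Δ (margY (compProd P W)) ≤ R := by
  refine RbarE_le_of_forall_condDiv_lt hP hPsum hW hWsum fun ε hε => ?_
  have hDav : Continuous (Dav d) := by unfold Dav; fun_prop
  obtain ⟨ε₀, hε₀, hV₀⟩ := exists_forall_condDiv_lt_compProd_mem hP hW hWsum
    (hDav.continuousAt.preimage_mem_nhds (Iio_mem_nhds hΔ))
  obtain ⟨⟨V, hV, _⟩, hVlt⟩ :=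
    iInf_lt_iff.mp (h.trans_lt (EReal.coe_pos.mpr (lt_min hε hε₀)))
  obtain ⟨hVdiv, hVR⟩ := lt_and_lt_of_coe_add_max_sub_lt (condDiv_nonneg hP hV hW hWsum) hVlt
  refine ⟨V, hV, hVdiv.trans_le (min_le_left _ _), ?_⟩
  calc RbarE P d Δ (margY (compProd P V))
      ≤ RbarE P d (Dav d (compProd P V)) (margY (compProd P V)) :=
        RbarE_antitone (hV₀ V hV (hVdiv.trans_le (min_le_right _ _))).le
    _ < (R + min ε ε₀ : ℝ) := hVR
    _ ≤ (R + ε : ℝ) := EReal.coe_le_coe_iff.mpr (by linarith [min_le_left ε ε₀])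

end exponents

theorem stmt19_general {X Y : Type*} [Fintype X] [Fintype Y]
    (P : X → ℝ) (hP : (∀ x, 0 ≤ P x) ∧ ∑ x, P x = 1)
    (W : X → Y → ℝ) (hW : ∀ x y, 0 < W x y) (hWsum : ∀ x, ∑ y, W x y = 1)
    (Q0 : Y → ℝ) (hQ0 : ∀ y, 0 < Q0 y)
    (d : X → Y → ℝ) (hd : ∀ x y, d x y = Real.log (Q0 y / W x y))
    (PW : X × Y → ℝ) (hPW : ∀ p, PW p = P p.1 * W p.1 p.2)
    (α β R : ℝ) :
    (E2exp P W d α β R = 0 ↔ RbarE P d (α - β) (margY PW) ≤ (R : EReal))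
    ∧ (α - β ≤ Dav d PW → R < mutInfo PW →
        0 < min (E1exp P W d α β R) (E2exp P W d α β R)) := by
  obtain ⟨hP, hPsum⟩ := hP
  obtain rfl : PW = compProd P W := funext hPW
  refine ⟨⟨fun h => RbarE_le_of_E2exp_nonpos hP hPsum hW hWsum h.le, fun h =>
    (E2exp_nonpos_of_RbarE_le ⟨fun x y => (hW x y).le, hWsum⟩ h).antisymm
      (E2exp_nonneg hP hW hWsum)⟩, fun hαβ hRI => ?_⟩
  have hRbar : ∀ Δ, Δ < Dav d (compProd P W) + (mutInfo (compProd P W) - R) →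
      ¬RbarE P d Δ (margY (compProd P W)) ≤ R := fun Δ hΔ h =>
    ((EReal.coe_lt_coe_iff.mpr (by linarith)).trans_le
      (coe_mutInfo_add_Dav_sub_le_RbarE hP hW hWsum hQ0 hd)).not_ge h
  have hgap : 0 < (mutInfo (compProd P W) - R) / 2 := half_pos (sub_pos.mpr hRI)
  have hE1 : 0 < E1exp P W d α β R := lt_of_not_ge fun h => hRbar _ (by linarith) <|
    RbarE_le_of_E1exp_nonpos hP hPsum hW hWsum h (lt_add_of_pos_right _ hgap)
  have hE2 : 0 < E2exp P W d α β R := lt_of_not_ge fun h => hRbar _ (by linarith) <|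
    RbarE_le_of_E2exp_nonpos hP hPsum hW hWsum h
  exact lt_min hE1 hE2

/-- `E₂ = 0` iff `R ≥ R̄(α−β; (P×W)_Y)`; consequently, if
`α − β ≤ D(P×W)` then `min{E₁, E₂} > 0` for every rate `R < I(P×W)` — no rate loss
relative to ordinary decoding. -/
theorem stmt19 {X Y : Type*} [Fintype X] [Fintype Y]
    (P : X → ℝ) (hP : (∀ x, 0 ≤ P x) ∧ ∑ x, P x = 1)
    (W : X → Y → ℝ) (hW : ∀ x y, 0 < W x y) (hWsum : ∀ x, ∑ y, W x y = 1)
    (Q0 : Y → ℝ) (hQ0 : ∀ y, 0 < Q0 y) (hQ0sum : ∑ y, Q0 y = 1)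
    (d : X → Y → ℝ) (hd : ∀ x y, d x y = Real.log (Q0 y / W x y))
    (PW : X × Y → ℝ) (hPW : ∀ p, PW p = P p.1 * W p.1 p.2)
    (α β R : ℝ) (hR : 0 ≤ R) :
    (E2exp P W d α β R = 0 ↔ RbarE P d (α - β) (margY PW) ≤ (R : EReal))
    ∧ (α - β ≤ Dav d PW → R < mutInfo PW →
        0 < min (E1exp P W d α β R) (E2exp P W d α β R)) :=
  stmt19_general P hP W hW hWsum Q0 hQ0 d hd PW hPW α β R
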